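/- arXiv:0906.0600 — 4 statements merged into one kernel-verified Lean document; each statement's English description precedes it below -/
import Mathlib

section
/- Let ψ : M → N and φ : N → L be K-linear maps of K-vector spaces. If two of the three maps ψ, φ, φ∘ψ are Fredholm, then so is the third; and in that case ind(φ∘ψ) = ind(φ) + ind(ψ). -/
/-- A `K`-linear map is Fredholm if its kernel and cokernel are finite dimensional. -/
def IsFredholm {K V W : Type*} [Field K] [AddCommGroup V] [Module K V]
    [AddCommGroup W] [Module K W] (φ : V →ₗ[K] W) : Prop :=
  FiniteDimensional K (LinearMap.ker φ) ∧ FiniteDimensional K (W ⧸ LinearMap.range φ)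

/-- The index of a `K`-linear map: `dim ker − dim coker`. -/
noncomputable def fIndex {K V W : Type*} [Field K] [AddCommGroup V] [Module K V]
    [AddCommGroup W] [Module K W] (φ : V →ₗ[K] W) : ℤ :=
  (Module.finrank K (LinearMap.ker φ) : ℤ) - (Module.finrank K (W ⧸ LinearMap.range φ) : ℤ)


section aux


open Module LinearMap Submodule

section helpers
variable {K V W : Type*} [Field K] [AddCommGroup V] [Module K V] [AddCommGroup W] [Module K W]

lemma fd_iff_sub_quot (p : Submodule K V) :
    FiniteDimensional K V ↔ (FiniteDimensional K p ∧ FiniteDimensional K (V ⧸ p)) := by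
  constructor
  · intro h; exact ⟨inferInstance, inferInstance⟩
  · rintro ⟨h1, h2⟩
    have h1' : Module.rank K p < Cardinal.aleph0 := Module.rank_lt_aleph0_iff.2 h1
    have h2' : Module.rank K (V ⧸ p) < Cardinal.aleph0 := Module.rank_lt_aleph0_iff.2 h2
    have : Module.rank K V < Cardinal.aleph0 := by
      rw [← Submodule.rank_quotient_add_rank p]
      exact Cardinal.add_lt_aleph0 h2' h1'
    exact Module.rank_lt_aleph0_iff.1 this

lemma fd_dom_iff (f : V →ₗ[K] W) :
    FiniteDimensional K V ↔ (FiniteDimensional K (ker f) ∧ FiniteDimensional K (range f)) := by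
  rw [fd_iff_sub_quot (ker f)]
  exact and_congr Iff.rfl (Module.Finite.equiv_iff f.quotKerEquivRange)

lemma finrank_dom (f : V →ₗ[K] W) [FiniteDimensional K V] :
    finrank K V = finrank K (ker f) + finrank K (range f) := by
  rw [← LinearMap.finrank_range_add_finrank_ker f, add_comm]

end helpers

section struct
variable {K M N L : Type*} [Field K]
    [AddCommGroup M] [Module K M] [AddCommGroup N] [Module K N]
    [AddCommGroup L] [Module K L] (ψ : M →ₗ[K] N) (φ : N →ₗ[K] L)

-- kernel side
noncomputable def eA1 : (ker (ψ.domRestrict (ker (φ ∘ₗ ψ)))) ≃ₗ[K] ker ψ :=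
  (LinearEquiv.ofEq _ _ (LinearMap.ker_domRestrict _ _)).trans
    (Submodule.comapSubtypeEquivOfLe (ker_le_ker_comp ψ φ))

lemma hA2 : range (ψ.domRestrict (ker (φ ∘ₗ ψ))) = range ψ ⊓ ker φ := by
  rw [LinearMap.range_domRestrict, LinearMap.ker_comp, Submodule.map_comap_eq]

lemma fdA : FiniteDimensional K (ker (φ ∘ₗ ψ)) ↔
    (FiniteDimensional K (ker ψ) ∧
      FiniteDimensional K (range ψ ⊓ ker φ : Submodule K N)) := by
  rw [fd_dom_iff (ψ.domRestrict (ker (φ ∘ₗ ψ)))]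
  exact and_congr (Module.Finite.equiv_iff (eA1 ψ φ))
    (Module.Finite.equiv_iff (LinearEquiv.ofEq _ _ (hA2 ψ φ)))

lemma frA [FiniteDimensional K (ker (φ ∘ₗ ψ))] :
    finrank K (ker (φ ∘ₗ ψ)) =
      finrank K (ker ψ) + finrank K (range ψ ⊓ ker φ : Submodule K N) := by
  rw [finrank_dom (ψ.domRestrict (ker (φ ∘ₗ ψ))), (eA1 ψ φ).finrank_eq,
    (LinearEquiv.ofEq _ _ (hA2 ψ φ)).finrank_eq]

end struct
section struct
variable {K M N L : Type*} [Field K]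
    [AddCommGroup M] [Module K M] [AddCommGroup N] [Module K N]
    [AddCommGroup L] [Module K L] (ψ : M →ₗ[K] N) (φ : N →ₗ[K] L)

-- coker of composition: f2 : N →ₗ L ⧸ range (φ∘ψ)
noncomputable def f2 : N →ₗ[K] L ⧸ range (φ ∘ₗ ψ) := (range (φ ∘ₗ ψ)).mkQ ∘ₗ φ

lemma hB1 : ker (f2 ψ φ) = range ψ ⊔ ker φ := by
  rw [f2, LinearMap.ker_comp, Submodule.ker_mkQ, LinearMap.range_comp,
    Submodule.comap_map_eq]

lemma hB2 : range (f2 ψ φ) = (range φ).map (range (φ ∘ₗ ψ)).mkQ := by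
  rw [f2]; exact LinearMap.range_comp _ _

noncomputable def eB1 : (N ⧸ (range ψ ⊔ ker φ)) ≃ₗ[K] range (f2 ψ φ) :=
  (Submodule.quotEquivOfEq _ _ (hB1 ψ φ).symm).trans (f2 ψ φ).quotKerEquivRange

noncomputable def eB2 : ((L ⧸ range (φ ∘ₗ ψ)) ⧸ range (f2 ψ φ)) ≃ₗ[K] L ⧸ range φ :=
  (Submodule.quotEquivOfEq _ _ (hB2 ψ φ)).trans
    (Submodule.quotientQuotientEquivQuotient _ _
      (LinearMap.range_comp_le_range ψ φ))

lemma fdB : FiniteDimensional K (L ⧸ range (φ ∘ₗ ψ)) ↔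
    (FiniteDimensional K (N ⧸ (range ψ ⊔ ker φ)) ∧
      FiniteDimensional K (L ⧸ range φ)) := by
  rw [fd_iff_sub_quot (range (f2 ψ φ))]
  exact and_congr (Module.Finite.equiv_iff (eB1 ψ φ)).symm
    (Module.Finite.equiv_iff (eB2 ψ φ))

lemma frB [FiniteDimensional K (L ⧸ range (φ ∘ₗ ψ))] :
    finrank K (L ⧸ range (φ ∘ₗ ψ)) =
      finrank K (N ⧸ (range ψ ⊔ ker φ)) + finrank K (L ⧸ range φ) := by
  rw [← Submodule.finrank_quotient_add_finrank (range (f2 ψ φ)),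
    (eB2 ψ φ).finrank_eq, ← (eB1 ψ φ).finrank_eq, add_comm]

-- coker of ψ: f3 : ker φ →ₗ N ⧸ range ψ
noncomputable def f3 : (ker φ) →ₗ[K] N ⧸ range ψ := (range ψ).mkQ ∘ₗ (ker φ).subtype

lemma hC1 : ker (f3 ψ φ) = comap (ker φ).subtype (range ψ) := by
  rw [f3, LinearMap.ker_comp, Submodule.ker_mkQ]

lemma hC2 : range (f3 ψ φ) = (ker φ).map (range ψ).mkQ := by
  rw [f3, LinearMap.range_comp, Submodule.range_subtype]

noncomputable def eC1 :
    ((ker φ) ⧸ comap (ker φ).subtype (range ψ)) ≃ₗ[K] range (f3 ψ φ) :=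
  (Submodule.quotEquivOfEq _ _ (hC1 ψ φ).symm).trans (f3 ψ φ).quotKerEquivRange

noncomputable def eC2 :
    ((N ⧸ range ψ) ⧸ range (f3 ψ φ)) ≃ₗ[K] N ⧸ (range ψ ⊔ ker φ) :=
  (Submodule.quotEquivOfEq _ _ (hC2 ψ φ)).trans
    (Submodule.quotientQuotientEquivQuotientSup _ _)

lemma fdC : FiniteDimensional K (N ⧸ range ψ) ↔
    (FiniteDimensional K ((ker φ) ⧸ comap (ker φ).subtype (range ψ)) ∧
      FiniteDimensional K (N ⧸ (range ψ ⊔ ker φ))) := by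
  rw [fd_iff_sub_quot (range (f3 ψ φ))]
  exact and_congr (Module.Finite.equiv_iff (eC1 ψ φ)).symm
    (Module.Finite.equiv_iff (eC2 ψ φ))

lemma frC [FiniteDimensional K (N ⧸ range ψ)] :
    finrank K (N ⧸ range ψ) =
      finrank K ((ker φ) ⧸ comap (ker φ).subtype (range ψ)) +
        finrank K (N ⧸ (range ψ ⊔ ker φ)) := by
  rw [← Submodule.finrank_quotient_add_finrank (range (f3 ψ φ)),
    (eC2 ψ φ).finrank_eq, ← (eC1 ψ φ).finrank_eq, add_comm]

-- ker φ decomposition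
lemma hD0 : comap (ker φ).subtype (range ψ) = comap (ker φ).subtype (range ψ ⊓ ker φ) := by
  ext ⟨x, hx⟩
  simp [Submodule.mem_comap, hx]

noncomputable def eD1 :
    (comap (ker φ).subtype (range ψ) : Submodule K (ker φ)) ≃ₗ[K]
      (range ψ ⊓ ker φ : Submodule K N) :=
  (LinearEquiv.ofEq _ _ (hD0 ψ φ)).trans (Submodule.comapSubtypeEquivOfLe inf_le_right)

lemma fdD : FiniteDimensional K (ker φ) ↔
    (FiniteDimensional K (range ψ ⊓ ker φ : Submodule K N) ∧
      FiniteDimensional K ((ker φ) ⧸ comap (ker φ).subtype (range ψ))) := by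
  rw [fd_iff_sub_quot (comap (ker φ).subtype (range ψ))]
  exact and_congr (Module.Finite.equiv_iff (eD1 ψ φ)) Iff.rfl

lemma frD [FiniteDimensional K (ker φ)] :
    finrank K (ker φ) =
      finrank K (range ψ ⊓ ker φ : Submodule K N) +
        finrank K ((ker φ) ⧸ comap (ker φ).subtype (range ψ)) := by
  rw [← Submodule.finrank_quotient_add_finrank (comap (ker φ).subtype (range ψ)),
    ← (eD1 ψ φ).finrank_eq, add_comm]

end struct

section main
variable {K M N L : Type*} [Field K]
    [AddCommGroup M] [Module K M] [AddCommGroup N] [Module K N]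
    [AddCommGroup L] [Module K L] (ψ : M →ₗ[K] N) (φ : N →ₗ[K] L)

lemma indexEq [FiniteDimensional K (ker (φ ∘ₗ ψ))]
    [FiniteDimensional K (L ⧸ range (φ ∘ₗ ψ))]
    [FiniteDimensional K (ker ψ)] [FiniteDimensional K (N ⧸ range ψ)]
    [FiniteDimensional K (ker φ)] [FiniteDimensional K (L ⧸ range φ)] :
    fIndex (φ ∘ₗ ψ) = fIndex φ + fIndex ψ := by
  haveI hX : FiniteDimensional K (range ψ ⊓ ker φ : Submodule K N) :=
    ((fdA ψ φ).1 inferInstance).2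
  haveI hQ : FiniteDimensional K ((ker φ) ⧸ comap (ker φ).subtype (range ψ)) :=
    ((fdD ψ φ).1 inferInstance).2
  haveI hY : FiniteDimensional K (N ⧸ (range ψ ⊔ ker φ)) :=
    ((fdC ψ φ).1 inferInstance).2
  have h1 := frA ψ φ
  have h2 := frB ψ φ
  have h3 := frC ψ φ
  have h4 := frD ψ φ
  simp only [fIndex]
  omega

theorem fredholm_comp_index' :
    (IsFredholm ψ → IsFredholm φ →
      IsFredholm (φ ∘ₗ ψ) ∧ fIndex (φ ∘ₗ ψ) = fIndex φ + fIndex ψ) ∧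
    (IsFredholm ψ → IsFredholm (φ ∘ₗ ψ) →
      IsFredholm φ ∧ fIndex (φ ∘ₗ ψ) = fIndex φ + fIndex ψ) ∧
    (IsFredholm φ → IsFredholm (φ ∘ₗ ψ) →
      IsFredholm ψ ∧ fIndex (φ ∘ₗ ψ) = fIndex φ + fIndex ψ) := by
  refine ⟨?_, ?_, ?_⟩
  · rintro ⟨hk1, hc1⟩ ⟨hk2, hc2⟩
    haveI := hk1; haveI := hc1; haveI := hk2; haveI := hc2
    haveI hX : FiniteDimensional K (range ψ ⊓ ker φ : Submodule K N) :=
      ((fdD ψ φ).1 hk2).1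
    haveI hQ : FiniteDimensional K ((ker φ) ⧸ comap (ker φ).subtype (range ψ)) :=
      ((fdD ψ φ).1 hk2).2
    haveI hY : FiniteDimensional K (N ⧸ (range ψ ⊔ ker φ)) := ((fdC ψ φ).1 hc1).2
    haveI hk12 : FiniteDimensional K (ker (φ ∘ₗ ψ)) := (fdA ψ φ).2 ⟨hk1, hX⟩
    haveI hc12 : FiniteDimensional K (L ⧸ range (φ ∘ₗ ψ)) := (fdB ψ φ).2 ⟨hY, hc2⟩
    exact ⟨⟨hk12, hc12⟩, indexEq ψ φ⟩
  · rintro ⟨hk1, hc1⟩ ⟨hk12, hc12⟩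
    haveI := hk1; haveI := hc1; haveI := hk12; haveI := hc12
    haveI hX : FiniteDimensional K (range ψ ⊓ ker φ : Submodule K N) :=
      ((fdA ψ φ).1 hk12).2
    haveI hY : FiniteDimensional K (N ⧸ (range ψ ⊔ ker φ)) := ((fdB ψ φ).1 hc12).1
    haveI hc2 : FiniteDimensional K (L ⧸ range φ) := ((fdB ψ φ).1 hc12).2
    haveI hQ : FiniteDimensional K ((ker φ) ⧸ comap (ker φ).subtype (range ψ)) :=
      ((fdC ψ φ).1 hc1).1
    haveI hk2 : FiniteDimensional K (ker φ) := (fdD ψ φ).2 ⟨hX, hQ⟩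
    exact ⟨⟨hk2, hc2⟩, indexEq ψ φ⟩
  · rintro ⟨hk2, hc2⟩ ⟨hk12, hc12⟩
    haveI := hk2; haveI := hc2; haveI := hk12; haveI := hc12
    haveI hk1 : FiniteDimensional K (ker ψ) := ((fdA ψ φ).1 hk12).1
    haveI hX : FiniteDimensional K (range ψ ⊓ ker φ : Submodule K N) :=
      ((fdA ψ φ).1 hk12).2
    haveI hY : FiniteDimensional K (N ⧸ (range ψ ⊔ ker φ)) := ((fdB ψ φ).1 hc12).1
    haveI hQ : FiniteDimensional K ((ker φ) ⧸ comap (ker φ).subtype (range ψ)) :=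
      ((fdD ψ φ).1 hk2).2
    haveI hc1 : FiniteDimensional K (N ⧸ range ψ) := (fdC ψ φ).2 ⟨hQ, hY⟩
    exact ⟨⟨hk1, hc1⟩, indexEq ψ φ⟩

end main

end aux

/-- If two of the three maps `ψ`, `φ`, `φ ∘ ψ` are Fredholm then so is the third, and in that
case `ind (φ ∘ ψ) = ind φ + ind ψ`. -/
theorem fredholm_comp_index {K M N L : Type*} [Field K]
    [AddCommGroup M] [Module K M] [AddCommGroup N] [Module K N]
    [AddCommGroup L] [Module K L] (ψ : M →ₗ[K] N) (φ : N →ₗ[K] L) :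
    (IsFredholm ψ → IsFredholm φ →
      IsFredholm (φ ∘ₗ ψ) ∧ fIndex (φ ∘ₗ ψ) = fIndex φ + fIndex ψ) ∧
    (IsFredholm ψ → IsFredholm (φ ∘ₗ ψ) →
      IsFredholm φ ∧ fIndex (φ ∘ₗ ψ) = fIndex φ + fIndex ψ) ∧
    (IsFredholm φ → IsFredholm (φ ∘ₗ ψ) →
      IsFredholm ψ ∧ fIndex (φ ∘ₗ ψ) = fIndex φ + fIndex ψ) := by
  exact fredholm_comp_index' ψ φ
end

section
/- Let V and U be K-vector spaces, let φ : V → U be a Fredholm K-linear map, and let f : V → U be a K-linear map whose image is finite dimensional. Then φ + f is Fredholm and ind(φ + f) = ind(φ). -/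
set_option linter.unusedSectionVars false

open Submodule LinearMap Module

section Aux

variable {K V U : Type*} [Field K] [AddCommGroup V] [Module K V] [AddCommGroup U] [Module K U]

/-- Extension of finite-dimensional by finite-dimensional is finite-dimensional. -/
lemma aux_fd_ext (p : Submodule K V) [FiniteDimensional K p]
    [FiniteDimensional K (V ⧸ p)] : FiniteDimensional K V := by
  have h := Submodule.rank_quotient_add_rank p
  have : Module.rank K V < Cardinal.aleph0 := by
    rw [← h]
    exact Cardinal.add_lt_aleph0 (Module.rank_lt_aleph0 K _) (Module.rank_lt_aleph0 K _)
  exact Module.rank_lt_aleph0_iff.mp this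

variable (ψ : V →ₗ[K] U) (W : Submodule K U) [FiniteDimensional K W]

lemma aux_ker_eq : LinearMap.ker (W.mkQ ∘ₗ ψ) = Submodule.comap ψ W := by
  rw [LinearMap.ker_comp, Submodule.ker_mkQ]

lemma aux_fd_comap (hk : FiniteDimensional K (LinearMap.ker ψ)) :
    FiniteDimensional K (Submodule.comap ψ W) := by
  set S := Submodule.comap ψ W
  set χ := ψ.domRestrict S
  have hker : LinearMap.ker χ = (LinearMap.ker ψ).comap S.subtype := ker_domRestrict S ψ
  have hle : LinearMap.ker ψ ≤ S := by
    intro x hx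
    simp only [S, Submodule.mem_comap, LinearMap.mem_ker.mp hx, Submodule.zero_mem]
  haveI : FiniteDimensional K (LinearMap.ker χ) := by
    rw [hker]
    exact (Submodule.comapSubtypeEquivOfLe hle).symm.finiteDimensional
  have hrange : LinearMap.range χ = S.map ψ := range_domRestrict S ψ
  haveI : FiniteDimensional K (LinearMap.range χ) := by
    rw [hrange, Submodule.map_comap_eq]
    exact Submodule.finiteDimensional_of_le inf_le_right
  haveI : FiniteDimensional K (S ⧸ LinearMap.ker χ) :=
    (χ.quotKerEquivRange).symm.finiteDimensional
  exact aux_fd_ext (LinearMap.ker χ)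

lemma aux_range_eq :
    LinearMap.range (W.mkQ ∘ₗ ψ) = (LinearMap.range ψ ⊔ W).map W.mkQ := by
  rw [LinearMap.range_comp, Submodule.map_sup]
  have : W.map W.mkQ = ⊥ :=
    eq_bot_iff.mpr (Submodule.map_le_iff_le_comap.mpr
      (le_of_eq (by rw [Submodule.comap_bot, Submodule.ker_mkQ])))
  rw [this, sup_bot_eq]

/-- The cokernel of `mkQ ∘ ψ` is `U ⧸ (range ψ ⊔ W)`. -/
noncomputable def auxCokerEquiv :
    ((U ⧸ W) ⧸ LinearMap.range (W.mkQ ∘ₗ ψ)) ≃ₗ[K] U ⧸ (LinearMap.range ψ ⊔ W) :=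
  (Submodule.quotEquivOfEq _ _ (aux_range_eq ψ W)).trans
    (Submodule.quotientQuotientEquivQuotient W (LinearMap.range ψ ⊔ W) le_sup_right)

end Aux

section Main

variable {K V U : Type*} [Field K] [AddCommGroup V] [Module K V] [AddCommGroup U] [Module K U]
variable (ψ : V →ₗ[K] U) (W : Submodule K U) [FiniteDimensional K W]

lemma aux_fredholm_mkQ (h : IsFredholm ψ) : IsFredholm (W.mkQ ∘ₗ ψ) := by
  obtain ⟨h1, h2⟩ := h
  constructor
  · rw [aux_ker_eq]
    exact aux_fd_comap ψ W h1
  · haveI : FiniteDimensional K (U ⧸ LinearMap.range ψ) := h2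
    haveI : FiniteDimensional K
        ((U ⧸ LinearMap.range ψ) ⧸
          ((LinearMap.range ψ ⊔ W).map (LinearMap.range ψ).mkQ)) := inferInstance
    haveI : FiniteDimensional K (U ⧸ (LinearMap.range ψ ⊔ W)) :=
      (Submodule.quotientQuotientEquivQuotient (LinearMap.range ψ)
        (LinearMap.range ψ ⊔ W) le_sup_left).finiteDimensional
    exact (auxCokerEquiv ψ W).symm.finiteDimensional

lemma aux_fredholm_of_mkQ (h : IsFredholm (W.mkQ ∘ₗ ψ)) : IsFredholm ψ := by
  obtain ⟨h1, h2⟩ := h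
  rw [aux_ker_eq] at h1
  constructor
  · haveI := h1
    have hle : LinearMap.ker ψ ≤ Submodule.comap ψ W := by
      intro x hx
      simp only [Submodule.mem_comap, LinearMap.mem_ker.mp hx, Submodule.zero_mem]
    exact Submodule.finiteDimensional_of_le hle
  · haveI : FiniteDimensional K (U ⧸ (LinearMap.range ψ ⊔ W)) :=
      (auxCokerEquiv ψ W).finiteDimensional
    set R := LinearMap.range ψ
    have hXeq : (R ⊔ W).map R.mkQ = W.map R.mkQ := by
      rw [Submodule.map_sup]
      have : R.map R.mkQ = ⊥ :=
      eq_bot_iff.mpr (Submodule.map_le_iff_le_comap.mpr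
        (le_of_eq (by rw [Submodule.comap_bot, Submodule.ker_mkQ])))
      rw [this, bot_sup_eq]
    haveI : FiniteDimensional K (W.map R.mkQ) := by
      have : W.map R.mkQ = LinearMap.range (R.mkQ.domRestrict W) := (range_domRestrict W R.mkQ).symm
      rw [this]
      infer_instance
    haveI : FiniteDimensional K ((R ⊔ W).map R.mkQ) := by rw [hXeq]; infer_instance
    haveI : FiniteDimensional K ((U ⧸ R) ⧸ (R ⊔ W).map R.mkQ) :=
      (Submodule.quotientQuotientEquivQuotient R (R ⊔ W) le_sup_left).symm.finiteDimensional
    exact aux_fd_ext ((R ⊔ W).map R.mkQ)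

lemma aux_index_mkQ (h : IsFredholm ψ) :
    fIndex (W.mkQ ∘ₗ ψ) = fIndex ψ + (Module.finrank K W : ℤ) := by
  obtain ⟨h1, h2⟩ := h
  haveI := h1; haveI := h2
  set R := LinearMap.range ψ
  set S := Submodule.comap ψ W
  haveI hS : FiniteDimensional K S := aux_fd_comap ψ W h1
  -- kernel computation
  set χ := ψ.domRestrict S
  have hle : LinearMap.ker ψ ≤ S := by
    intro x hx
    simp only [S, Submodule.mem_comap, LinearMap.mem_ker.mp hx, Submodule.zero_mem]
  have hk1 : finrank K (LinearMap.range χ) + finrank K (LinearMap.ker χ) = finrank K S :=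
    finrank_range_add_finrank_ker χ
  have hk2 : finrank K (LinearMap.ker χ) = finrank K (LinearMap.ker ψ) := by
    rw [ker_domRestrict]
    exact LinearEquiv.finrank_eq (Submodule.comapSubtypeEquivOfLe hle)
  have hk3 : finrank K (LinearMap.range χ) = finrank K (R ⊓ W : Submodule K U) := by
    have : LinearMap.range χ = R ⊓ W := by
      rw [range_domRestrict, Submodule.map_comap_eq]
    rw [this]
  have hkerq : finrank K (LinearMap.ker (W.mkQ ∘ₗ ψ)) = finrank K S := by
    rw [aux_ker_eq]
  -- cokernel computation
  have hc1 : finrank K ((U ⧸ W) ⧸ LinearMap.range (W.mkQ ∘ₗ ψ))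
      = finrank K (U ⧸ (R ⊔ W)) := LinearEquiv.finrank_eq (auxCokerEquiv ψ W)
  have hXeq : (R ⊔ W).map R.mkQ = W.map R.mkQ := by
    rw [Submodule.map_sup]
    have : R.map R.mkQ = ⊥ :=
      eq_bot_iff.mpr (Submodule.map_le_iff_le_comap.mpr
        (le_of_eq (by rw [Submodule.comap_bot, Submodule.ker_mkQ])))
    rw [this, bot_sup_eq]
  set ρ := R.mkQ.domRestrict W
  have hrW : LinearMap.range ρ = W.map R.mkQ := range_domRestrict W R.mkQ
  have hc2 : finrank K (LinearMap.range ρ) + finrank K (LinearMap.ker ρ) = finrank K W :=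
    finrank_range_add_finrank_ker ρ
  have hc3 : finrank K (LinearMap.ker ρ) = finrank K (W ⊓ R : Submodule K U) := by
    have : LinearMap.ker ρ = (W ⊓ R).comap W.subtype := by
      rw [ker_domRestrict, Submodule.ker_mkQ, Submodule.comap_inf,
        Submodule.comap_subtype_self, top_inf_eq]
    rw [this]
    exact LinearEquiv.finrank_eq (Submodule.comapSubtypeEquivOfLe inf_le_left)
  have hc4 : finrank K ((U ⧸ R) ⧸ (R ⊔ W).map R.mkQ) + finrank K ((R ⊔ W).map R.mkQ)
      = finrank K (U ⧸ R) := Submodule.finrank_quotient_add_finrank _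
  have hc5 : finrank K ((U ⧸ R) ⧸ (R ⊔ W).map R.mkQ) = finrank K (U ⧸ (R ⊔ W)) :=
    LinearEquiv.finrank_eq (Submodule.quotientQuotientEquivQuotient R (R ⊔ W) le_sup_left)
  have hinf : finrank K (R ⊓ W : Submodule K U) = finrank K (W ⊓ R : Submodule K U) := by
    rw [inf_comm]
  have hX : finrank K ((R ⊔ W).map R.mkQ) = finrank K (W.map R.mkQ) := by rw [hXeq]
  have hrWrank : finrank K (LinearMap.range ρ) = finrank K (W.map R.mkQ) := by rw [hrW]
  have hbridge : finrank K (U ⧸ LinearMap.range ψ) = finrank K (U ⧸ R) := rfl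
  have hbridge2 : finrank K (LinearMap.ker ψ) = finrank K (LinearMap.ker ψ) := rfl
  unfold fIndex
  rw [hkerq, hc1, hbridge]
  omega

end Main

/-- A finite-rank perturbation of a Fredholm map is Fredholm with the same index. -/
theorem fredholm_add_finite_rank {K V U : Type*} [Field K]
    [AddCommGroup V] [Module K V] [AddCommGroup U] [Module K U]
    (φ f : V →ₗ[K] U) (hφ : IsFredholm φ)
    (hf : FiniteDimensional K (LinearMap.range f)) :
    IsFredholm (φ + f) ∧ fIndex (φ + f) = fIndex φ := by
  set W := LinearMap.range f
  haveI := hf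
  have hcomp : W.mkQ ∘ₗ (φ + f) = W.mkQ ∘ₗ φ := by
    ext x
    have h0 : W.mkQ (f x) = 0 := (Submodule.Quotient.mk_eq_zero W).mpr ⟨x, rfl⟩
    simp [h0]
    exact ⟨x, rfl⟩
  have hπφ : IsFredholm (W.mkQ ∘ₗ φ) := aux_fredholm_mkQ φ W hφ
  have hπpf : IsFredholm (W.mkQ ∘ₗ (φ + f)) := by rw [hcomp]; exact hπφ
  have hpf : IsFredholm (φ + f) := aux_fredholm_of_mkQ (φ + f) W hπpf
  refine ⟨hpf, ?_⟩
  have e1 := aux_index_mkQ (φ + f) W hpf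
  have e2 := aux_index_mkQ φ W hφ
  rw [hcomp, e2] at e1
  omega
end

section
/- Let φ : V → V' be a Fredholm K-linear map with ind(φ) = i, and suppose dim ker φ ≤ dim coker φ. Let U ⊆ V and W ⊆ V' be subspaces with V = ker φ ⊕ U and V' = W ⊕ im φ, let f₀ : ker φ → W be an injective K-linear map, and let f : V → V' be the K-linear map equal to f₀ on ker φ and equal to 0 on U. Then φ + f is injective, Fredholm, and ind(φ + f) = i. -/
/-- If `φ` is Fredholm of index `i` with `dim ker φ ≤ dim coker φ`, `V = ker φ ⊕ U`,
`V' = W ⊕ im φ`, `f₀ : ker φ → W` is injective, and `f` equals `f₀` on `ker φ` and `0` on `U`,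
then `φ + f` is injective, Fredholm, of index `i`. -/
theorem injective_fredholm_add_of_le {K V V' : Type*} [Field K]
    [AddCommGroup V] [Module K V] [AddCommGroup V'] [Module K V']
    (φ : V →ₗ[K] V') (i : ℤ) (hφ : IsFredholm φ) (hi : fIndex φ = i)
    (hle : Module.finrank K (LinearMap.ker φ) ≤
      Module.finrank K (V' ⧸ LinearMap.range φ))
    (U : Submodule K V) (W : Submodule K V')
    (hU : IsCompl (LinearMap.ker φ) U) (hW : IsCompl W (LinearMap.range φ))
    (f₀ : ↥(LinearMap.ker φ) →ₗ[K] ↥W) (hf₀ : Function.Injective f₀)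
    (f : V →ₗ[K] V')
    (hf₁ : ∀ v : ↥(LinearMap.ker φ), f ↑v = ↑(f₀ v))
    (hf₂ : ∀ u ∈ U, f u = 0) :
    Function.Injective (φ + f) ∧ IsFredholm (φ + f) ∧ fIndex (φ + f) = i := by
  classical
  have hdec : ∀ v : V, ∃ x, ∃ hx : x ∈ LinearMap.ker φ, ∃ y ∈ U, x + y = v := by
    intro v
    have hv' : v ∈ LinearMap.ker φ ⊔ U := by rw [hU.sup_eq_top]; trivial
    obtain ⟨x, hx, y, hy, h⟩ := Submodule.mem_sup.mp hv'
    exact ⟨x, hx, y, hy, h⟩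
  set g : ↥(LinearMap.ker φ) →ₗ[K] V' := W.subtype ∘ₗ f₀ with hg
  -- injectivity
  have hinj : Function.Injective (φ + f) := by
    rw [← LinearMap.ker_eq_bot, LinearMap.ker_eq_bot']
    intro v hv
    obtain ⟨x, hx, y, hy, rfl⟩ := hdec v
    have h0 : φ y + ((f₀ ⟨x, hx⟩ : W) : V') = 0 := by
      have h1 : φ x = 0 := hx
      have h2 : f x = ((f₀ ⟨x, hx⟩ : W) : V') := hf₁ ⟨x, hx⟩
      have h3 : f y = 0 := hf₂ y hy
      have h4 := hv
      simp only [LinearMap.add_apply, map_add, h1, h2, h3, zero_add, add_zero] at h4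
      first
      | exact h4
      | (rw [add_comm]; exact h4)
      | (abel_nf at h4 ⊢; exact h4)
    have hWmem : ((f₀ ⟨x, hx⟩ : W) : V') ∈ W ⊓ LinearMap.range φ := by
      refine ⟨(f₀ ⟨x, hx⟩).2, ⟨-y, ?_⟩⟩
      rw [map_neg, neg_eq_iff_add_eq_zero]
      exact h0
    rw [hW.inf_eq_bot, Submodule.mem_bot] at hWmem
    have hx0 : (⟨x, hx⟩ : LinearMap.ker φ) = 0 := by
      apply hf₀
      rw [map_zero]
      ext
      simp [hWmem]
    have hxz : x = 0 := by simpa using congrArg Subtype.val hx0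
    have hy0 : y ∈ LinearMap.ker φ ⊓ U := ⟨by simpa [hWmem] using h0, hy⟩
    rw [hU.inf_eq_bot, Submodule.mem_bot] at hy0
    simp [hxz, hy0]
  -- range φ ≤ range (φ + f)
  have hrange : LinearMap.range φ ≤ LinearMap.range (φ + f) := by
    rintro _ ⟨v, rfl⟩
    obtain ⟨x, hx, y, hy, rfl⟩ := hdec v
    refine ⟨y, ?_⟩
    have h1 : φ x = 0 := hx
    simp [LinearMap.add_apply, hf₂ y hy, map_add, h1]
  -- range (φ + f) = range φ ⊔ range g
  have hR : LinearMap.range (φ + f) = LinearMap.range φ ⊔ LinearMap.range g := by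
    apply le_antisymm
    · rintro _ ⟨v, rfl⟩
      obtain ⟨x, hx, y, hy, rfl⟩ := hdec v
      apply Submodule.mem_sup.mpr
      refine ⟨φ (x + y), LinearMap.mem_range_self _ _, g ⟨x, hx⟩,
        LinearMap.mem_range_self _ _, ?_⟩
      have h2 : f x = ((f₀ ⟨x, hx⟩ : W) : V') := hf₁ ⟨x, hx⟩
      have h3 : f y = 0 := hf₂ y hy
      simp only [LinearMap.add_apply, map_add, h2, h3, add_zero, hg,
        LinearMap.comp_apply, Submodule.coe_subtype]
      abel
    · refine sup_le hrange ?_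
      rintro _ ⟨⟨x, hx⟩, rfl⟩
      refine ⟨x, ?_⟩
      have h1 : φ x = 0 := hx
      have h2 : f x = ((f₀ ⟨x, hx⟩ : W) : V') := hf₁ ⟨x, hx⟩
      simp [LinearMap.add_apply, h1, h2, hg]
  set Q := V' ⧸ LinearMap.range φ
  haveI hQfin : FiniteDimensional K Q := hφ.2
  haveI hkfin : FiniteDimensional K (LinearMap.ker φ) := hφ.1
  set π := (LinearMap.range φ).mkQ with hπ
  have hbot : (LinearMap.range φ).map π = ⊥ := by
    rw [eq_bot_iff]
    rintro _ ⟨w, hw, rfl⟩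
    simpa [hπ, Submodule.Quotient.mk_eq_zero] using hw
  have hmap : (LinearMap.range (φ + f)).map π = LinearMap.range (π ∘ₗ g) := by
    rw [hR, Submodule.map_sup, hbot, bot_sup_eq]
    exact (LinearMap.range_comp g π).symm
  have hginj : Function.Injective (π ∘ₗ g) := by
    rw [← LinearMap.ker_eq_bot, LinearMap.ker_eq_bot']
    intro x hx
    have h5 : π (g x) = 0 := hx
    have hmem : g x ∈ W ⊓ LinearMap.range φ := by
      refine ⟨(f₀ x).2, ?_⟩
      exact (Submodule.Quotient.mk_eq_zero _).mp (by simpa [hπ] using h5)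
    rw [hW.inf_eq_bot, Submodule.mem_bot] at hmem
    apply hf₀
    rw [map_zero]
    ext
    simpa [hg] using hmem
  have hrk : Module.finrank K ((LinearMap.range (φ + f)).map π) =
      Module.finrank K (LinearMap.ker φ) := by
    rw [hmap]
    exact LinearMap.finrank_range_of_inj hginj
  -- equivalence of cokernels
  let e := Submodule.quotientQuotientEquivQuotient (LinearMap.range φ)
    (LinearMap.range (φ + f)) hrange
  haveI hcfin : FiniteDimensional K (V' ⧸ LinearMap.range (φ + f)) :=
    Module.Finite.equiv e
  have hcrk : Module.finrank K (V' ⧸ LinearMap.range (φ + f)) +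
      Module.finrank K (LinearMap.ker φ) = Module.finrank K Q := by
    rw [← e.finrank_eq, ← hrk]
    exact Submodule.finrank_quotient_add_finrank _
  have hker0 : Module.finrank K (LinearMap.ker (φ + f)) = 0 := by
    rw [LinearMap.ker_eq_bot.mpr hinj]
    exact finrank_bot K V
  refine ⟨hinj, ⟨by rw [LinearMap.ker_eq_bot.mpr hinj]; infer_instance, hcfin⟩, ?_⟩
  have hi' : (Module.finrank K (LinearMap.ker φ) : ℤ) - Module.finrank K Q = i := hi
  rw [fIndex, hker0]
  omega
end

section
/- Let φ : V → V' be a Fredholm K-linear map with ind(φ) = i, and suppose dim ker φ ≥ dim coker φ. Let U ⊆ V and W ⊆ V' be subspaces with V = ker φ ⊕ U and V' = W ⊕ im φ, let f₀ : ker φ → W be a surjective K-linear map, and let f : V → V' be the K-linear map equal to f₀ on ker φ and equal to 0 on U. Then φ + f is surjective, Fredholm, and ind(φ + f) = i. -/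
/-- If `φ` is Fredholm of index `i` with `dim ker φ ≥ dim coker φ`, `V = ker φ ⊕ U`,
`V' = W ⊕ im φ`, `f₀ : ker φ → W` is surjective, and `f` equals `f₀` on `ker φ` and `0` on `U`,
then `φ + f` is surjective, Fredholm, of index `i`. -/
theorem surjective_fredholm_add_of_ge {K V V' : Type*} [Field K]
    [AddCommGroup V] [Module K V] [AddCommGroup V'] [Module K V']
    (φ : V →ₗ[K] V') (i : ℤ) (hφ : IsFredholm φ) (hi : fIndex φ = i)
    (hge : Module.finrank K (V' ⧸ LinearMap.range φ) ≤
      Module.finrank K (LinearMap.ker φ))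
    (U : Submodule K V) (W : Submodule K V')
    (hU : IsCompl (LinearMap.ker φ) U) (hW : IsCompl W (LinearMap.range φ))
    (f₀ : ↥(LinearMap.ker φ) →ₗ[K] ↥W) (hf₀ : Function.Surjective f₀)
    (f : V →ₗ[K] V')
    (hf₁ : ∀ v : ↥(LinearMap.ker φ), f ↑v = ↑(f₀ v))
    (hf₂ : ∀ u ∈ U, f u = 0) :
    Function.Surjective (φ + f) ∧ IsFredholm (φ + f) ∧ fIndex (φ + f) = i := by
  obtain ⟨hk, hc⟩ := hφ
  -- W is equivalent to the cokernel of φ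
  let e : (V' ⧸ LinearMap.range φ) ≃ₗ[K] W :=
    Submodule.quotientEquivOfIsCompl _ _ hW.symm
  haveI : FiniteDimensional K W := e.finiteDimensional
  have hWdim : Module.finrank K W = Module.finrank K (V' ⧸ LinearMap.range φ) :=
    e.finrank_eq.symm
  -- surjectivity
  have hsurj : Function.Surjective (φ + f) := by
    intro v'
    obtain ⟨w, r, hw, hr, hwr⟩ := Submodule.codisjoint_iff_exists_add_eq.mp hW.codisjoint v'
    obtain ⟨x, hx⟩ := hr
    obtain ⟨a, u, ha, hu, hau⟩ := Submodule.codisjoint_iff_exists_add_eq.mp hU.codisjoint x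
    obtain ⟨k, hk'⟩ := hf₀ ⟨w, hw⟩
    refine ⟨(k : V) + u, ?_⟩
    have hφk : φ (k : V) = 0 := k.2
    have hφa : φ a = 0 := ha
    have hφu : φ u = r := by
      have h : φ x = r := hx
      rw [← hau] at h
      simpa [hφa] using h
    have hfk : f (k : V) = w := by rw [hf₁ k, hk']
    have hfu : f u = 0 := hf₂ u hu
    simp only [LinearMap.add_apply, map_add, hφk, hφu, hfk, hfu]
    rw [← hwr]; abel
  -- kernel of φ + f
  have hker : LinearMap.ker (φ + f)
      = (LinearMap.ker f₀).map (LinearMap.ker φ).subtype := by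
    ext v
    simp only [LinearMap.mem_ker, Submodule.mem_map, LinearMap.add_apply]
    constructor
    · intro hv
      obtain ⟨a, u, ha, hu, hau⟩ := Submodule.codisjoint_iff_exists_add_eq.mp hU.codisjoint v
      have hφv : φ v = φ u := by
        rw [← hau]; simp [show φ a = 0 from ha]
      have hfv : f v = (f₀ ⟨a, ha⟩ : V') := by
        rw [← hau, map_add, hf₂ u hu, add_zero]
        exact hf₁ ⟨a, ha⟩
      have hsum : φ u + (f₀ ⟨a, ha⟩ : V') = 0 := by rw [← hφv, ← hfv]; exact hv
      have hφu0 : φ u = 0 := by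
        have h1 : φ u ∈ W := by
          have : φ u = -(f₀ ⟨a, ha⟩ : V') := by
            rw [eq_neg_iff_add_eq_zero]; exact hsum
          rw [this]
          exact W.neg_mem (f₀ ⟨a, ha⟩).2
        exact Submodule.disjoint_def.mp hW.disjoint _ h1 ⟨u, rfl⟩
      have hu0 : u = 0 :=
        Submodule.disjoint_def.mp hU.disjoint u hφu0 hu
      have hf₀0 : f₀ ⟨a, ha⟩ = 0 := by
        ext
        have := hsum
        rw [hφu0, zero_add] at this
        simpa using this
      refine ⟨⟨a, ha⟩, hf₀0, ?_⟩
      simp only [Submodule.subtype_apply]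
      rw [← hau, hu0, add_zero]
    · rintro ⟨k, hk0, rfl⟩
      have hfk : f (k : V) = (f₀ k : V') := hf₁ k
      simp [hfk, k.2, show f₀ k = 0 from hk0]
  have hkerdim : Module.finrank K (LinearMap.ker (φ + f))
      = Module.finrank K (LinearMap.ker f₀) := by
    rw [hker]
    exact Submodule.finrank_map_subtype_eq _ _
  haveI : FiniteDimensional K (LinearMap.ker (φ + f)) := by
    rw [hker]; infer_instance
  -- cokernel of φ + f
  have hrange : LinearMap.range (φ + f) = ⊤ := LinearMap.range_eq_top.mpr hsurj
  haveI hsub : Subsingleton (V' ⧸ LinearMap.range (φ + f)) := by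
    rw [hrange]
    exact Submodule.Quotient.subsingleton_iff.mpr rfl
  haveI : FiniteDimensional K (V' ⧸ LinearMap.range (φ + f)) :=
    Module.finite_of_rank_eq_zero (by simp [rank_subsingleton'])
  have hcok0 : Module.finrank K (V' ⧸ LinearMap.range (φ + f)) = 0 :=
    Module.finrank_zero_of_subsingleton
  -- rank-nullity for f₀
  have hrn : Module.finrank K (LinearMap.range f₀) + Module.finrank K (LinearMap.ker f₀)
      = Module.finrank K (LinearMap.ker φ) := LinearMap.finrank_range_add_finrank_ker f₀
  have hrange₀ : LinearMap.range f₀ = ⊤ := LinearMap.range_eq_top.mpr hf₀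
  rw [hrange₀, finrank_top] at hrn
  refine ⟨hsurj, ⟨inferInstance, inferInstance⟩, ?_⟩
  rw [← hi]
  unfold fIndex
  rw [hcok0, hkerdim, ← hWdim]
  push_cast
  omega
end
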